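/- For every H ∈ (1/4, 1/2) there exists a finite constant C_H > 0 (one may take C_H = (2^{H−3}/(2−H)) ∫_ℝ e^{−η²} |η|^{5−2H} dη) such that for all θ ∈ (0,1), all ε ∈ (0,1), and all t ≥ ε^θ: ∫_0^{t−ε^θ} ∫_ℝ e^{−2(t−s)ξ²} (1 − e^{−εξ²})² |ξ|^{1−2H} dξ ds ≤ C_H · ε^{H+(2−H)(1−θ)}. -/

import Mathlib

/-!
Since `0 ≤ 1 - e^{-x} ≤ x`, the factor `(1 - e^{-εξ²})²` is at most `ε²ξ⁴`, so the inner integral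
is at most `ε² ∫ e^{-2(t-s)ξ²} |ξ|^{5-2H} dξ = ε² (2(t-s))^{H-3} Γ(3-H)` by Gaussian scaling
(and `C_H = 2^{H-3} Γ(3-H) / (2-H)`). Integrating `(t-s)^{H-3}` over `s < t - ε^θ` gives at most
`(ε^θ)^{H-2} / (2-H)`, and `ε² (ε^θ)^{H-2} = ε^{H+(2-H)(1-θ)}`.
-/

open MeasureTheory Real Set

theorem integral_exp_neg_mul_sq_mul_abs_rpow {b s : ℝ} (hb : 0 < b) (hs : -1 < s) :
    ∫ x : ℝ, exp (-b * x ^ 2) * |x| ^ s = b ^ (-(s + 1) / 2) * Gamma ((s + 1) / 2) := by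
  have h := integral_rpow_mul_exp_neg_mul_rpow two_pos hs hb
  simp only [rpow_two] at h
  have h2 := integral_comp_abs (f := fun y => exp (-b * y ^ 2) * y ^ s)
  simp only [sq_abs] at h2
  rw [h2, setIntegral_congr_fun measurableSet_Ioi (fun x _ => mul_comm _ _), h]
  ring

theorem integrable_exp_neg_mul_sq_mul_abs_rpow {b s : ℝ} (hb : 0 < b) (hs : -1 < s) :
    Integrable fun x : ℝ => exp (-b * x ^ 2) * |x| ^ s := by
  refine Integrable.of_integral_ne_zero ?_
  rw [integral_exp_neg_mul_sq_mul_abs_rpow hb hs]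
  have : 0 < Gamma ((s + 1) / 2) := Gamma_pos_of_pos (by linarith)
  positivity

theorem one_sub_exp_neg_sq_le {x : ℝ} (hx : 0 ≤ x) : (1 - exp (-x)) ^ 2 ≤ x ^ 2 := by
  have := add_one_le_exp (-x)
  have := exp_le_one_iff.mpr (neg_nonpos.mpr hx)
  exact pow_le_pow_left₀ (by linarith) (by linarith) 2

theorem abs_rpow_mul_pow_four_le (ξ p : ℝ) : |ξ| ^ p * ξ ^ 4 ≤ |ξ| ^ (p + 4) := by
  rcases eq_or_ne ξ 0 with rfl | hξ
  · simpa using rpow_nonneg le_rfl (p + 4)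
  · rw [show ξ ^ 4 = |ξ| ^ (4 : ℕ) by rw [pow_abs, abs_of_nonneg (by positivity)]]
    exact_mod_cast (rpow_add_natCast (abs_ne_zero.mpr hξ) p 4).ge

theorem exp_neg_mul_sq_mul_one_sub_exp_sq_le {a ε : ℝ} (hε : 0 ≤ ε) (p ξ : ℝ) :
    exp (-a * ξ ^ 2) * (1 - exp (-ε * ξ ^ 2)) ^ 2 * |ξ| ^ p
      ≤ ε ^ 2 * (exp (-a * ξ ^ 2) * |ξ| ^ (p + 4)) := by
  have hsq : (1 - exp (-ε * ξ ^ 2)) ^ 2 ≤ (ε * ξ ^ 2) ^ 2 := by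
    rw [neg_mul]; exact one_sub_exp_neg_sq_le (by positivity)
  calc exp (-a * ξ ^ 2) * (1 - exp (-ε * ξ ^ 2)) ^ 2 * |ξ| ^ p
      ≤ exp (-a * ξ ^ 2) * (ε * ξ ^ 2) ^ 2 * |ξ| ^ p := by gcongr
    _ = ε ^ 2 * (exp (-a * ξ ^ 2) * (|ξ| ^ p * ξ ^ 4)) := by ring
    _ ≤ ε ^ 2 * (exp (-a * ξ ^ 2) * |ξ| ^ (p + 4)) := by
        gcongr; exact abs_rpow_mul_pow_four_le ξ p

theorem integral_exp_neg_mul_sq_mul_one_sub_exp_sq_le {a ε p : ℝ} (ha : 0 < a) (hε : 0 ≤ ε)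
    (hp : -5 < p) :
    ∫ ξ : ℝ, exp (-a * ξ ^ 2) * (1 - exp (-ε * ξ ^ 2)) ^ 2 * |ξ| ^ p
      ≤ ε ^ 2 * (a ^ (-(p + 5) / 2) * Gamma ((p + 5) / 2)) := by
  have hp4 : -1 < p + 4 := by linarith
  calc ∫ ξ : ℝ, exp (-a * ξ ^ 2) * (1 - exp (-ε * ξ ^ 2)) ^ 2 * |ξ| ^ p
      ≤ ∫ ξ : ℝ, ε ^ 2 * (exp (-a * ξ ^ 2) * |ξ| ^ (p + 4)) :=
        integral_mono_of_nonneg (.of_forall fun ξ => by positivity)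
          ((integrable_exp_neg_mul_sq_mul_abs_rpow ha hp4).const_mul _)
          (.of_forall (exp_neg_mul_sq_mul_one_sub_exp_sq_le hε p))
    _ = ε ^ 2 * (a ^ (-(p + 5) / 2) * Gamma ((p + 5) / 2)) := by
        rw [integral_const_mul, integral_exp_neg_mul_sq_mul_abs_rpow ha hp4]
        ring_nf

theorem setIntegral_Ioo_sub_rpow_le {q δ t : ℝ} (hq : q < -1) (hδ : 0 < δ) (hδt : δ ≤ t) :
    ∫ s in Ioo 0 (t - δ), (t - s) ^ q ≤ δ ^ (q + 1) / -(q + 1) := by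
  have hsub : ∫ s in Ioo 0 (t - δ), (t - s) ^ q = ∫ u in δ..t, u ^ q := by
    rw [← integral_Ioc_eq_integral_Ioo, ← intervalIntegral.integral_of_le (by linarith),
      intervalIntegral.integral_comp_sub_left (fun u => u ^ q), sub_zero, sub_sub_cancel]
  rw [hsub, integral_rpow (Or.inr ⟨by linarith, fun h => by
    rw [uIcc_of_le hδt] at h; exact h.1.not_gt hδ⟩)]
  have : 0 < t ^ (q + 1) := rpow_pos_of_pos (by linarith) _
  rw [div_neg, ← neg_div]
  exact div_le_div_of_nonpos_of_le (by linarith) (by linarith)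

theorem setIntegral_Ioo_le_of_le_mul_sub_rpow {f : ℝ → ℝ} {C q δ t : ℝ} (hC : 0 ≤ C) (hq : q < -1)
    (hδ : 0 < δ) (hδt : δ ≤ t) (hf0 : ∀ s ∈ Ioo 0 (t - δ), 0 ≤ f s)
    (hf : ∀ s ∈ Ioo 0 (t - δ), f s ≤ C * (t - s) ^ q) :
    ∫ s in Ioo 0 (t - δ), f s ≤ C * (δ ^ (q + 1) / -(q + 1)) := by
  have hcont : ContinuousOn (fun s => C * (t - s) ^ q) (Icc 0 (t - δ)) :=
    continuousOn_const.mul <| (continuousOn_const.sub continuousOn_id).rpow_const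
      fun s hs => Or.inl (show 0 < t - s by linarith [hs.2]).ne'
  calc ∫ s in Ioo 0 (t - δ), f s
      ≤ ∫ s in Ioo 0 (t - δ), C * (t - s) ^ q :=
        integral_mono_of_nonneg (ae_restrict_of_forall_mem measurableSet_Ioo hf0)
          (hcont.integrableOn_Icc.mono_set Ioo_subset_Icc_self)
          (ae_restrict_of_forall_mem measurableSet_Ioo hf)
    _ ≤ C * (δ ^ (q + 1) / -(q + 1)) := by
        rw [integral_const_mul]
        exact mul_le_mul_of_nonneg_left (setIntegral_Ioo_sub_rpow_le hq hδ hδt) hC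

theorem stmt4 (H : ℝ) (hH2 : H < 1 / 2) :
    ∃ C : ℝ, 0 < C ∧
      C = ((2 : ℝ) ^ (H - 3) / (2 - H)) * (∫ η : ℝ, Real.exp (-η ^ 2) * |η| ^ (5 - 2 * H)) ∧
      ∀ θ ε t : ℝ, 0 < θ → θ < 1 → 0 < ε → ε < 1 → ε ^ θ ≤ t →
        (∫ s in Set.Ioo (0 : ℝ) (t - ε ^ θ), ∫ ξ : ℝ,
            Real.exp (-2 * (t - s) * ξ ^ 2) * (1 - Real.exp (-ε * ξ ^ 2)) ^ 2 *
              |ξ| ^ (1 - 2 * H)) ≤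
          C * ε ^ (H + (2 - H) * (1 - θ)) := by
  have hI : ∫ η : ℝ, exp (-η ^ 2) * |η| ^ (5 - 2 * H) = Gamma (3 - H) := by
    have h := integral_exp_neg_mul_sq_mul_abs_rpow one_pos (s := 5 - 2 * H) (by linarith)
    simp only [neg_mul, one_mul, one_rpow] at h
    rw [h]; ring_nf
  have hΓ : 0 < Gamma (3 - H) := Gamma_pos_of_pos (by linarith)
  have h2H : 0 < 2 - H := by linarith
  refine ⟨_, by rw [hI]; positivity, rfl, fun θ ε t _ _ hε _ hεt => ?_⟩
  have hδ : 0 < ε ^ θ := rpow_pos_of_pos hε θ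
  have hinner : ∀ s ∈ Ioo 0 (t - ε ^ θ), ∫ ξ : ℝ, exp (-2 * (t - s) * ξ ^ 2) *
      (1 - exp (-ε * ξ ^ 2)) ^ 2 * |ξ| ^ (1 - 2 * H)
        ≤ ε ^ 2 * (2 ^ (H - 3) * Gamma (3 - H)) * (t - s) ^ (H - 3) := by
    intro s hs
    have hts : 0 < t - s := by linarith [hs.2]
    have h := integral_exp_neg_mul_sq_mul_one_sub_exp_sq_le (p := 1 - 2 * H)
      (by positivity : 0 < 2 * (t - s)) hε.le (by linarith)
    rw [mul_rpow zero_le_two hts.le] at h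
    simp only [neg_mul] at h ⊢
    convert h using 1
    ring_nf
  calc _ ≤ ε ^ 2 * (2 ^ (H - 3) * Gamma (3 - H)) * ((ε ^ θ) ^ (H - 3 + 1) / -(H - 3 + 1)) :=
        setIntegral_Ioo_le_of_le_mul_sub_rpow (by positivity) (by linarith) hδ hεt
          (fun s _ => integral_nonneg fun ξ => by positivity) hinner
    _ = _ := by
        have hexp : ε ^ 2 * ε ^ (θ * (H - 3 + 1)) = ε ^ (H + (2 - H) * (1 - θ)) := by
          rw [← rpow_natCast, ← rpow_add hε]
          ring_nf
        rw [hI, ← rpow_mul hε.le, ← hexp, show -(H - 3 + 1) = 2 - H by ring]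
        ring
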